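/- arXiv:1812.05300 — 2 statements merged into one kernel-verified Lean document; each statement's English description precedes it below -/
import Mathlib

section
/- Monotonicity estimate (abstract form): Let σ₁, σ₂ : Ω → ℝ be measurable with σ₁ ≥ c > 0 a.e., and let u₁, u₂ ∈ H¹(Ω) satisfy the weak equations ∫ σⱼ ∇uⱼ · ∇v = ⟨g, v|∂Ω⟩ for all test functions v (same boundary data g). Then, writing Qⱼ = ∫ σⱼ |∇uⱼ|², one has Q₂ - Q₁ ≥ ∫ (σ₂/σ₁)(σ₁ - σ₂)|∇u₂|², as a consequence of the algebraic identity Q₂ - Q₁ = ∫ σ₁|∇u₁ - (σ₂/σ₁)∇u₂|² + ∫ (σ₂ - σ₂²/σ₁)|∇u₂|² which holds whenever ∫ σ₁ ∇u₁·∇u₂ = ∫ σ₂ |∇u₂|² = Q₂ and the integrals are finite. -/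
/-! The monotonicity estimate is the integrated form of the pointwise inequality
`0 ≤ σ₁ ‖f₁ - (σ₂/σ₁) f₂‖²`. Expanding and integrating gives
`2 ∫ σ₂ ⟪f₁, f₂⟫ ≤ Q₁ + ∫ (σ₂²/σ₁) ‖f₂‖²`; the variational identity `∫ σ₂ ⟪f₁, f₂⟫ = Q₁`
turns this into `Q₁ ≤ ∫ (σ₂²/σ₁) ‖f₂‖²`, and the right-hand side of the estimate is exactly
`Q₂ - ∫ (σ₂²/σ₁) ‖f₂‖²`. -/

open MeasureTheory RealInnerProductSpace

section

variable {E : Type*} [NormedAddCommGroup E] [InnerProductSpace ℝ E]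

theorem two_mul_inner_le_mul_norm_sq_add {a : ℝ} (ha : 0 < a) (b : ℝ) (x y : E) :
    2 * (b * ⟪x, y⟫) ≤ a * ‖x‖ ^ 2 + b ^ 2 / a * ‖y‖ ^ 2 := by
  have hsq : 0 ≤ ‖a • x - b • y‖ ^ 2 := by positivity
  rw [norm_sub_sq_real, real_inner_smul_left, real_inner_smul_right, norm_smul, norm_smul,
    mul_pow, mul_pow, Real.norm_eq_abs, Real.norm_eq_abs, sq_abs, sq_abs] at hsq
  have hexpand : a * ‖x‖ ^ 2 + b ^ 2 / a * ‖y‖ ^ 2 - 2 * (b * ⟪x, y⟫)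
      = (a ^ 2 * ‖x‖ ^ 2 - 2 * (a * (b * ⟪x, y⟫)) + b ^ 2 * ‖y‖ ^ 2) / a := by
    field_simp
    ring
  rw [← sub_nonneg, hexpand]
  exact div_nonneg hsq ha.le

theorem two_mul_integral_inner_le {Ω : Type*} [MeasurableSpace Ω] {μ : Measure Ω}
    {σ₁ σ₂ : Ω → ℝ} {f₁ f₂ : Ω → E} (hσ₁ : ∀ᵐ x ∂μ, 0 < σ₁ x)
    (hi1 : Integrable (fun x => σ₁ x * ‖f₁ x‖ ^ 2) μ)
    (hi21 : Integrable (fun x => σ₂ x * ⟪f₁ x, f₂ x⟫) μ)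
    (hi3 : Integrable (fun x => σ₂ x ^ 2 / σ₁ x * ‖f₂ x‖ ^ 2) μ) :
    2 * ∫ x, σ₂ x * ⟪f₁ x, f₂ x⟫ ∂μ
      ≤ (∫ x, σ₁ x * ‖f₁ x‖ ^ 2 ∂μ) + ∫ x, σ₂ x ^ 2 / σ₁ x * ‖f₂ x‖ ^ 2 ∂μ := by
  rw [← integral_const_mul, ← integral_add hi1 hi3]
  exact integral_mono_ae (hi21.const_mul 2) (hi1.add hi3) <|
    hσ₁.mono fun x hx => two_mul_inner_le_mul_norm_sq_add hx (σ₂ x) (f₁ x) (f₂ x)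

end

theorem stmt2_general {Ω : Type*} [MeasurableSpace Ω] (μ : Measure Ω)
    {E : Type*} [NormedAddCommGroup E] [InnerProductSpace ℝ E]
    (σ₁ σ₂ : Ω → ℝ) (f₁ f₂ : Ω → E) (c : ℝ) (hc : 0 < c)
    (hσ₁ : ∀ᵐ x ∂μ, c ≤ σ₁ x)
    (hi1 : Integrable (fun x => σ₁ x * ‖f₁ x‖ ^ 2) μ)
    (hi2 : Integrable (fun x => σ₂ x * ‖f₂ x‖ ^ 2) μ)
    (hi21 : Integrable (fun x => σ₂ x * ⟪f₁ x, f₂ x⟫) μ)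
    (hi3 : Integrable (fun x => σ₂ x ^ 2 / σ₁ x * ‖f₂ x‖ ^ 2) μ)
    (hvar2 : ∫ x, σ₂ x * ⟪f₁ x, f₂ x⟫ ∂μ = ∫ x, σ₁ x * ‖f₁ x‖ ^ 2 ∂μ) :
    (∫ x, σ₂ x * ‖f₂ x‖ ^ 2 ∂μ) - ∫ x, σ₁ x * ‖f₁ x‖ ^ 2 ∂μ
      ≥ ∫ x, σ₂ x / σ₁ x * (σ₁ x - σ₂ x) * ‖f₂ x‖ ^ 2 ∂μ := by
  have hpos : ∀ᵐ x ∂μ, 0 < σ₁ x := hσ₁.mono fun x hx => hc.trans_le hx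
  have hrhs : ∫ x, σ₂ x / σ₁ x * (σ₁ x - σ₂ x) * ‖f₂ x‖ ^ 2 ∂μ
      = (∫ x, σ₂ x * ‖f₂ x‖ ^ 2 ∂μ) - ∫ x, σ₂ x ^ 2 / σ₁ x * ‖f₂ x‖ ^ 2 ∂μ := by
    rw [← integral_sub hi2 hi3]
    refine integral_congr_ae (hpos.mono fun x hx => ?_)
    field_simp [hx.ne']
  have hcs := two_mul_integral_inner_le hpos hi1 hi21 hi3
  rw [hvar2] at hcs
  rw [hrhs, ge_iff_le]
  linarith

/-- Abstract monotonicity estimate: if `u₁, u₂` (represented through their gradients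
`f₁, f₂`) solve the weak conductivity equations with the same Neumann data, so that
both variational identities hold, then `Q₂ - Q₁ ≥ ∫ (σ₂/σ₁)(σ₁-σ₂)|f₂|²`. -/
theorem stmt2 {Ω : Type*} [MeasurableSpace Ω] (μ : Measure Ω)
    {E : Type*} [NormedAddCommGroup E] [InnerProductSpace ℝ E]
    (σ₁ σ₂ : Ω → ℝ) (f₁ f₂ : Ω → E) (c : ℝ) (hc : 0 < c)
    (hσ₁ : ∀ᵐ x ∂μ, c ≤ σ₁ x)
    (hi1 : Integrable (fun x => σ₁ x * ‖f₁ x‖ ^ 2) μ)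
    (hi2 : Integrable (fun x => σ₂ x * ‖f₂ x‖ ^ 2) μ)
    (hi12 : Integrable (fun x => σ₁ x * ⟪f₁ x, f₂ x⟫) μ)
    (hi21 : Integrable (fun x => σ₂ x * ⟪f₁ x, f₂ x⟫) μ)
    (hi3 : Integrable (fun x => σ₂ x ^ 2 / σ₁ x * ‖f₂ x‖ ^ 2) μ)
    (hvar1 : ∫ x, σ₁ x * ⟪f₁ x, f₂ x⟫ ∂μ = ∫ x, σ₂ x * ‖f₂ x‖ ^ 2 ∂μ)
    (hvar2 : ∫ x, σ₂ x * ⟪f₁ x, f₂ x⟫ ∂μ = ∫ x, σ₁ x * ‖f₁ x‖ ^ 2 ∂μ) :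
    (∫ x, σ₂ x * ‖f₂ x‖ ^ 2 ∂μ) - ∫ x, σ₁ x * ‖f₁ x‖ ^ 2 ∂μ
      ≥ ∫ x, σ₂ x / σ₁ x * (σ₁ x - σ₂ x) * ‖f₂ x‖ ^ 2 ∂μ :=
  stmt2_general μ σ₁ σ₂ f₁ f₂ c hc hσ₁ hi1 hi2 hi21 hi3 hvar2
end

section
/- For a piecewise continuous κ : Ω → ℝ with supp κ ⊆ Ω and Ω \ supp κ connected, one has cl(inn-supp κ) = supp κ = outsupp κ. -/
open MeasureTheory

/-- `U` is a relatively open subset of `cl Ω`. -/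
def RelOpenIn {n : ℕ} (Ω U : Set (EuclideanSpace ℝ (Fin n))) : Prop :=
  ∃ V : Set (EuclideanSpace ℝ (Fin n)), IsOpen V ∧ U = V ∩ closure Ω

/-- `κ = 0` almost everywhere on `U`. -/
def VanishesAEOn {n : ℕ} (κ : EuclideanSpace ℝ (Fin n) → ℝ)
    (U : Set (EuclideanSpace ℝ (Fin n))) : Prop :=
  ∀ᵐ x, x ∈ U → κ x = 0

/-- `U` is connected to the boundary `∂Ω`: `U ∩ Ω` is connected and `U` meets `∂Ω`. -/
def ConnectedToBoundary {n : ℕ} (Ω U : Set (EuclideanSpace ℝ (Fin n))) : Prop :=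
  IsConnected (U ∩ Ω) ∧ (U ∩ frontier Ω).Nonempty

/-- The (essential) support of `κ` in `cl Ω`. -/
def suppIn {n : ℕ} (Ω : Set (EuclideanSpace ℝ (Fin n)))
    (κ : EuclideanSpace ℝ (Fin n) → ℝ) : Set (EuclideanSpace ℝ (Fin n)) :=
  closure Ω \ ⋃₀ {U | RelOpenIn Ω U ∧ VanishesAEOn κ U}

/-- The outer support of `κ`. -/
def outSupp {n : ℕ} (Ω : Set (EuclideanSpace ℝ (Fin n)))
    (κ : EuclideanSpace ℝ (Fin n) → ℝ) : Set (EuclideanSpace ℝ (Fin n)) :=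
  closure Ω \ ⋃₀ {U | RelOpenIn Ω U ∧ ConnectedToBoundary Ω U ∧ VanishesAEOn κ U}

/-- The inner support of `κ`. -/
def innSupp {n : ℕ} (Ω : Set (EuclideanSpace ℝ (Fin n)))
    (κ : EuclideanSpace ℝ (Fin n) → ℝ) : Set (EuclideanSpace ℝ (Fin n)) :=
  ⋃₀ {U | IsOpen U ∧ U ⊆ Ω ∧ 0 < essInf (fun x => |κ x|) (volume.restrict U)}

/-- `out M`, the outer support of the characteristic function of `M`. -/
def outSet {n : ℕ} (Ω M : Set (EuclideanSpace ℝ (Fin n))) : Set (EuclideanSpace ℝ (Fin n)) :=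
  outSupp Ω (M.indicator fun _ => (1 : ℝ))

/-!
The relatively open sets on which `κ` vanishes a.e. have a largest member (Lindelöf), and
`supp κ` is its complement in `cl Ω`. Near a point of continuity where `κ ≠ 0`, `|κ|` is
bounded away from `0`, so off `inn-supp κ` the function vanishes on `O`, hence a.e. on `Ω`;
as `supp κ ⊆ Ω`, this gives `supp κ ⊆ cl(inn-supp κ)`, the reverse inclusion being immediate.
Since `supp κ ⊆ Ω` and `Ω` is bounded, the largest vanishing set contains `∂Ω ≠ ∅`, and its
trace on `Ω` is the connected set `Ω \ supp κ`; so it is admissible in the definition of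
`outsupp κ`.
-/

open Set Filter Topology

section EssInf

variable {α : Type*} [MeasurableSpace α] {μ : Measure α} {f : α → ℝ}

theorem essInf_abs_restrict_nonpos {U W : Set α} (hWU : W ⊆ U) (hW : MeasurableSet W)
    (hμW : μ W ≠ 0) (hf : ∀ᵐ x ∂μ, x ∈ W → f x = 0) :
    essInf (fun x => |f x|) (μ.restrict U) ≤ 0 := by
  refine liminf_le_of_frequently_le (fun hpos => hμW ?_)
    (isBoundedUnder_of ⟨0, fun x => abs_nonneg _⟩)
  have : ∀ᵐ x ∂μ.restrict W, False := by
    filter_upwards [ae_restrict_of_ae_restrict_of_subset hWU hpos, ae_restrict_of_ae hf,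
      ae_restrict_mem hW] with x hfx hf hx
    simp [hf hx] at hfx
  exact Measure.restrict_eq_zero.1 (ae_eq_bot.1 (eventually_false_iff_eq_bot.1 this))

theorem le_essInf_of_ae_mem_Icc [NeZero μ] {c d : ℝ} (h : ∀ᵐ x ∂μ, f x ∈ Icc c d) :
    c ≤ essInf f μ :=
  le_essInf_of_ae_le c (h.mono fun _ hx => hx.1)
    (isCoboundedUnder_ge_of_eventually_le _ (h.mono fun _ hx => hx.2))

end EssInf

section Support

variable {n : ℕ} {Ω : Set (EuclideanSpace ℝ (Fin n))} {κ : EuclideanSpace ℝ (Fin n) → ℝ}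

def vanishingSet (Ω : Set (EuclideanSpace ℝ (Fin n))) (κ : EuclideanSpace ℝ (Fin n) → ℝ) :
    Set (EuclideanSpace ℝ (Fin n)) :=
  ⋃₀ {U | RelOpenIn Ω U ∧ VanishesAEOn κ U}

theorem suppIn_eq_closure_diff_vanishingSet : suppIn Ω κ = closure Ω \ vanishingSet Ω κ := rfl

theorem subset_vanishingSet {U : Set (EuclideanSpace ℝ (Fin n))} (hU : RelOpenIn Ω U)
    (hκ : VanishesAEOn κ U) : U ⊆ vanishingSet Ω κ :=
  subset_sUnion_of_mem ⟨hU, hκ⟩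

theorem vanishingSet_eq_sUnion_inter_closure :
    vanishingSet Ω κ = (⋃₀ {V | IsOpen V ∧ VanishesAEOn κ (V ∩ closure Ω)}) ∩ closure Ω := by
  apply Subset.antisymm
  · rintro x ⟨_, ⟨⟨V, hV, rfl⟩, hκ⟩, hxV, hxΩ⟩
    exact ⟨⟨V, ⟨hV, hκ⟩, hxV⟩, hxΩ⟩
  · rintro x ⟨⟨V, hV, hxV⟩, hxΩ⟩
    exact subset_vanishingSet ⟨V, hV.1, rfl⟩ hV.2 ⟨hxV, hxΩ⟩

theorem relOpenIn_vanishingSet : RelOpenIn Ω (vanishingSet Ω κ) :=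
  ⟨_, isOpen_sUnion fun _ hV => hV.1, vanishingSet_eq_sUnion_inter_closure⟩

theorem vanishesAEOn_vanishingSet : VanishesAEOn κ (vanishingSet Ω κ) := by
  obtain ⟨T, hTc, hT, hTU⟩ := TopologicalSpace.isOpen_sUnion_countable
    {V | IsOpen V ∧ VanishesAEOn κ (V ∩ closure Ω)} fun _ hV => hV.1
  have hκT : ∀ᵐ x, ∀ V ∈ T, x ∈ V ∩ closure Ω → κ x = 0 :=
    (ae_ball_iff hTc).2 fun V hV => (hT hV).2
  filter_upwards [hκT] with x hx hxS
  rw [vanishingSet_eq_sUnion_inter_closure, ← hTU] at hxS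
  obtain ⟨⟨V, hVT, hxV⟩, hxΩ⟩ := hxS
  exact hx V hVT ⟨hxV, hxΩ⟩

theorem vanishingSet_subset_closure : vanishingSet Ω κ ⊆ closure Ω := by
  rw [vanishingSet_eq_sUnion_inter_closure]
  exact inter_subset_right

theorem isClosed_suppIn : IsClosed (suppIn Ω κ) := by
  obtain ⟨V, hV, hVΩ⟩ := relOpenIn_vanishingSet (Ω := Ω) (κ := κ)
  rw [suppIn_eq_closure_diff_vanishingSet, hVΩ, sdiff_inter_self_eq_sdiff]
  exact isClosed_closure.sdiff hV

theorem closure_diff_suppIn : closure Ω \ suppIn Ω κ = vanishingSet Ω κ :=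
  sdiff_sdiff_cancel_left vanishingSet_subset_closure

theorem vanishingSet_inter_self : vanishingSet Ω κ ∩ Ω = Ω \ suppIn Ω κ := by
  rw [← closure_diff_suppIn, inter_comm, ← inter_sdiff_assoc, inter_eq_left.2 subset_closure]

theorem innSupp_subset_suppIn : innSupp Ω κ ⊆ suppIn Ω κ := by
  rintro x ⟨U, ⟨hU, hUΩ, hκU⟩, hxU⟩
  refine ⟨subset_closure (hUΩ hxU), fun hxS => hκU.not_ge ?_⟩
  obtain ⟨V, hV, hVΩ⟩ := relOpenIn_vanishingSet (Ω := Ω) (κ := κ)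
  have hxV : x ∈ V := (hVΩ ▸ show x ∈ vanishingSet Ω κ from hxS).1
  have hUV : U ∩ V ⊆ vanishingSet Ω κ := fun y hy => hVΩ ▸ ⟨hy.2, subset_closure (hUΩ hy.1)⟩
  refine essInf_abs_restrict_nonpos inter_subset_left (hU.inter hV).measurableSet
    ((hU.inter hV).measure_pos volume ⟨x, hxU, hxV⟩).ne' ?_
  filter_upwards [vanishesAEOn_vanishingSet (Ω := Ω) (κ := κ)] with y hy hyUV
  exact hy (hUV hyUV)

theorem mem_innSupp_of_continuousAt {y : EuclideanSpace ℝ (Fin n)} (hΩ : IsOpen Ω) (hy : y ∈ Ω)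
    (hκ : ContinuousAt κ y) (hκy : κ y ≠ 0) : y ∈ innSupp Ω κ := by
  set c := |κ y| / 2 with hc_def
  have hc : 0 < c := half_pos (abs_pos.2 hκy)
  have hnear : {z | |κ z - κ y| < c} ∩ Ω ∈ 𝓝 y :=
    inter_mem (hκ.eventually (Metric.ball_mem_nhds _ hc)) (hΩ.mem_nhds hy)
  obtain ⟨U, hUsub, hU, hyU⟩ := mem_nhds_iff.1 hnear
  have hbounds : ∀ᵐ z ∂volume.restrict U, |κ z| ∈ Icc c (3 * c) := by
    filter_upwards [ae_restrict_mem hU.measurableSet] with z hz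
    have hzy : |κ z - κ y| < c := (hUsub hz).1
    have h₁ := abs_sub_abs_le_abs_sub (κ z) (κ y)
    have h₂ := abs_sub_abs_le_abs_sub (κ y) (κ z)
    rw [abs_sub_comm] at h₂
    constructor <;> linarith
  have : NeZero (volume.restrict U) :=
    ⟨fun h => (hU.measure_pos volume ⟨y, hyU⟩).ne' (Measure.restrict_eq_zero.1 h)⟩
  exact ⟨U, ⟨hU, fun z hz => (hUsub hz).2, hc.trans_le (le_essInf_of_ae_mem_Icc hbounds)⟩, hyU⟩

theorem vanishesAEOn_diff_innSupp {O : Set (EuclideanSpace ℝ (Fin n))} (hΩ : IsOpen Ω)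
    (hO : IsOpen O) (hnull : volume (Ω \ O) = 0) (hcont : ContinuousOn κ O) :
    VanishesAEOn κ (Ω \ innSupp Ω κ) := by
  filter_upwards [measure_eq_zero_iff_ae_notMem.1 hnull] with z hz ⟨hzΩ, hzinn⟩
  have hzO : z ∈ O := by_contra fun h => hz ⟨hzΩ, h⟩
  by_contra hκz
  exact hzinn (mem_innSupp_of_continuousAt hΩ hzΩ (hcont.continuousAt (hO.mem_nhds hzO)) hκz)

theorem suppIn_subset_closure_innSupp (hΩ : IsOpen Ω) (hsupp : suppIn Ω κ ⊆ Ω)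
    (hκ : VanishesAEOn κ (Ω \ innSupp Ω κ)) : suppIn Ω κ ⊆ closure (innSupp Ω κ) := by
  intro x hx
  by_contra hxc
  set B := Ω ∩ (closure (innSupp Ω κ))ᶜ
  have hB : IsOpen B := hΩ.inter isClosed_closure.isOpen_compl
  have hBκ : VanishesAEOn κ (B ∩ closure Ω) := by
    filter_upwards [hκ] with z hz hzB
    exact hz ⟨hzB.1.1, fun h => hzB.1.2 (subset_closure h)⟩
  exact hx.2 (subset_vanishingSet ⟨B, hB, rfl⟩ hBκ ⟨⟨hsupp hx, hxc⟩, hx.1⟩)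

theorem closure_innSupp_eq_suppIn (hΩ : IsOpen Ω) (hsupp : suppIn Ω κ ⊆ Ω)
    (hκ : VanishesAEOn κ (Ω \ innSupp Ω κ)) : closure (innSupp Ω κ) = suppIn Ω κ :=
  (closure_minimal innSupp_subset_suppIn isClosed_suppIn).antisymm
    (suppIn_subset_closure_innSupp hΩ hsupp hκ)

theorem suppIn_subset_outSupp : suppIn Ω κ ⊆ outSupp Ω κ :=
  sdiff_subset_sdiff_right (sUnion_subset_sUnion fun _ hU => ⟨hU.1, hU.2.2⟩)

theorem Bornology.IsBounded.nonempty_frontier {E : Type*} [NormedAddCommGroup E]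
    [NormedSpace ℝ E] [Nontrivial E] {s : Set E} (hb : Bornology.IsBounded s)
    (hs : s.Nonempty) : (frontier s).Nonempty :=
  nonempty_frontier_iff.2 ⟨hs, fun h => NormedSpace.unbounded_univ ℝ E (h ▸ hb)⟩

theorem connectedToBoundary_vanishingSet [Nontrivial (EuclideanSpace ℝ (Fin n))] (hΩo : IsOpen Ω)
    (hΩb : Bornology.IsBounded Ω) (hsupp : suppIn Ω κ ⊆ Ω)
    (hconn : IsConnected (Ω \ suppIn Ω κ)) : ConnectedToBoundary Ω (vanishingSet Ω κ) := by
  refine ⟨vanishingSet_inter_self ▸ hconn, ?_⟩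
  obtain ⟨z, hz⟩ := hΩb.nonempty_frontier (hconn.nonempty.mono sdiff_subset)
  have hzΩ : z ∉ Ω := by
    rw [hΩo.frontier_eq] at hz
    exact hz.2
  exact ⟨z, closure_diff_suppIn ▸ ⟨frontier_subset_closure hz, fun h => hzΩ (hsupp h)⟩, hz⟩

theorem suppIn_eq_outSupp [Nontrivial (EuclideanSpace ℝ (Fin n))] (hΩo : IsOpen Ω)
    (hΩb : Bornology.IsBounded Ω) (hsupp : suppIn Ω κ ⊆ Ω)
    (hconn : IsConnected (Ω \ suppIn Ω κ)) : suppIn Ω κ = outSupp Ω κ :=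
  suppIn_subset_outSupp.antisymm <| sdiff_subset_sdiff_right <| subset_sUnion_of_mem
    ⟨relOpenIn_vanishingSet, connectedToBoundary_vanishingSet hΩo hΩb hsupp hconn,
      vanishesAEOn_vanishingSet⟩

end Support

theorem stmt12_general {n : ℕ} (hn : 2 ≤ n) (Ω : Set (EuclideanSpace ℝ (Fin n)))
    (hΩo : IsOpen Ω) (hΩb : Bornology.IsBounded Ω)
    (κ : EuclideanSpace ℝ (Fin n) → ℝ)
    (O : Set (EuclideanSpace ℝ (Fin n))) (hOo : IsOpen O)
    (hnull : volume (Ω \ O) = 0) (hcont : ContinuousOn κ O)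
    (hsupp : suppIn Ω κ ⊆ Ω) (hconn : IsConnected (Ω \ suppIn Ω κ)) :
    closure (innSupp Ω κ) = suppIn Ω κ ∧ suppIn Ω κ = outSupp Ω κ := by
  have : Nonempty (Fin n) := ⟨⟨0, by omega⟩⟩
  exact ⟨closure_innSupp_eq_suppIn hΩo hsupp (vanishesAEOn_diff_innSupp hΩo hOo hnull hcont),
    suppIn_eq_outSupp hΩo hΩb hsupp hconn⟩

/-- For a piecewise continuous `κ` with `supp κ ⊆ Ω` and `Ω \ supp κ` connected,
`cl(inn-supp κ) = supp κ = outsupp κ`. -/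
theorem stmt12 {n : ℕ} (hn : 2 ≤ n) (Ω : Set (EuclideanSpace ℝ (Fin n)))
    (hΩo : IsOpen Ω) (hΩb : Bornology.IsBounded Ω) (hΩc : IsConnected Ω)
    (κ : EuclideanSpace ℝ (Fin n) → ℝ) (hκ : Measurable κ)
    (O : Set (EuclideanSpace ℝ (Fin n))) (hOo : IsOpen O) (hOΩ : O ⊆ Ω)
    (hnull : volume (Ω \ O) = 0) (hcont : ContinuousOn κ O)
    (hsupp : suppIn Ω κ ⊆ Ω) (hconn : IsConnected (Ω \ suppIn Ω κ)) :
    closure (innSupp Ω κ) = suppIn Ω κ ∧ suppIn Ω κ = outSupp Ω κ :=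
  stmt12_general hn Ω hΩo hΩb κ O hOo hnull hcont hsupp hconn
end
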